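/- Let X and Y be nontrivial real Banach spaces, let H be a closed linear subspace of L(X,Y) containing all finite rank operators, and let δ > 0. If H (with the induced operator norm) is δ-average rough and the dual space X* is non-rough, then Y is δ-average rough. -/

import Mathlib

open scoped BigOperators

/-- A Banach space `Z` is `δ`-average rough. -/
def IsAverageRough (Z : Type*) [NormedAddCommGroup Z] (δ : ℝ) : Prop :=
  ∀ n : ℕ, 0 < n → ∀ x : Fin n → Z, (∀ i, ‖x i‖ = 1) →
    ∀ ε > (0 : ℝ), ∀ η > (0 : ℝ), ∃ y : Z, 0 < ‖y‖ ∧ ‖y‖ < η ∧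
      (δ - ε) * ‖y‖ ≤ (1 / (n : ℝ)) * ∑ i, (‖x i + y‖ + ‖x i - y‖) - 2

/-- A Banach space `Z` is `δ`-rough. -/
def IsRough (Z : Type*) [NormedAddCommGroup Z] (δ : ℝ) : Prop :=
  ∀ x : Z, ‖x‖ = 1 →
    ∀ ε > (0 : ℝ), ∀ η > (0 : ℝ), ∃ y : Z, 0 < ‖y‖ ∧ ‖y‖ < η ∧
      (δ - ε) * ‖y‖ ≤ ‖x + y‖ + ‖x - y‖ - 2

/-- A Banach space `Z` is non-rough if it is `ε`-rough for no `ε > 0`. -/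
def NonRough (Z : Type*) [NormedAddCommGroup Z] : Prop :=
  ¬ ∃ ε > (0 : ℝ), IsRough Z ε

/-- A Banach space `Z` is octahedral. -/
def Octahedral (Z : Type*) [NormedAddCommGroup Z] : Prop :=
  ∀ (n : ℕ) (x : Fin n → Z), (∀ i, ‖x i‖ = 1) →
    ∀ ε > (0 : ℝ), ∃ y : Z, ‖y‖ = 1 ∧ ∀ i, 2 - ε ≤ ‖x i + y‖

/-- A Banach space `Z` is alternatively octahedral. -/
def AlternativelyOctahedral (Z : Type*) [NormedAddCommGroup Z] : Prop :=
  ∀ (n : ℕ) (x : Fin n → Z), (∀ i, ‖x i‖ = 1) →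
    ∀ ε > (0 : ℝ), ∃ y : Z, ‖y‖ = 1 ∧ ∀ i, 2 - ε ≤ max ‖x i + y‖ ‖x i - y‖

/-- A Banach space `X` is weakly `δ`-average rough: every non-empty relatively weak*
open subset of the closed unit ball of the dual has diameter at least `δ`. -/
def WeaklyAverageRough (X : Type*) [NormedAddCommGroup X] [NormedSpace ℝ X] (δ : ℝ) : Prop :=
  ∀ V : Set (WeakDual ℝ X), IsOpen V →
    ∀ U : Set (StrongDual ℝ X),
      U = {f : StrongDual ℝ X | ‖f‖ ≤ 1} ∩
            {f : StrongDual ℝ X | StrongDual.toWeakDual f ∈ V} →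
      U.Nonempty → δ ≤ Metric.diam U

/-!
Non-roughness of `X*` yields a norm-one functional `f` at which the dual norm is almost flat:
`‖f + g‖ + ‖f - g‖ ≤ 2 + r ‖g‖` for all small `g`. Flatness forces every slice
`{x ∈ B_X | f x ≥ 1 - β}` to have diameter at most `r + O(β)`. Average roughness of `H`, applied to
the rank-one operators `f ⊗ yᵢ`, gives a small `S ∈ H`. The norms of `f ⊗ yᵢ ± S` are almost
attained on the slice of width `O(‖S‖)`, whose points all lie close to one point `x₀`; hence
`‖f ⊗ yᵢ ± S‖ ≤ ‖yᵢ ± S x₀‖ + ‖S‖ (2r + O(‖S‖))`, and `S x₀` witnesses the average roughness of `Y`.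
-/

open ContinuousLinearMap

section AverageGap

variable {Z W : Type*} [NormedAddCommGroup Z] [NormedAddCommGroup W] {n : ℕ}

noncomputable def averageGap (x : Fin n → Z) (y : Z) : ℝ :=
  (1 / (n : ℝ)) * ∑ i, (‖x i + y‖ + ‖x i - y‖) - 2

lemma one_div_mul_sum_le_add {a b : Fin n → ℝ} {c : ℝ} (hn : 0 < n) (h : ∀ i, a i ≤ b i + c) :
    (1 / (n : ℝ)) * ∑ i, a i ≤ (1 / (n : ℝ)) * ∑ i, b i + c := by
  have hsum : ∑ i, a i ≤ ∑ i, b i + n * c := by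
    simpa [Finset.sum_add_distrib] using Finset.sum_le_sum fun i (_ : i ∈ Finset.univ) => h i
  have hn' : (n : ℝ) ≠ 0 := by positivity
  calc (1 / (n : ℝ)) * ∑ i, a i ≤ (1 / (n : ℝ)) * (∑ i, b i + n * c) := by gcongr
    _ = (1 / (n : ℝ)) * ∑ i, b i + c := by field_simp

lemma averageGap_le_of_forall_le {x : Fin n → Z} {y : Fin n → W} {a : Z} {b : W} {c : ℝ}
    (hn : 0 < n) (h : ∀ i, ‖x i + a‖ + ‖x i - a‖ ≤ ‖y i + b‖ + ‖y i - b‖ + c) :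
    averageGap x a ≤ averageGap y b + c := by
  have := one_div_mul_sum_le_add hn h
  unfold averageGap
  linarith

lemma averageGap_zero {x : Fin n → Z} (hn : 0 < n) (hx : ∀ i, ‖x i‖ = 1) :
    averageGap x 0 = 0 := by
  simp only [averageGap, add_zero, sub_zero, hx, Finset.sum_const, Finset.card_univ,
    Fintype.card_fin, nsmul_eq_mul]
  field_simp
  ring

lemma two_mul_norm_le_norm_add_add_norm_sub [NormedSpace ℝ Z] (x y : Z) :
    2 * ‖x‖ ≤ ‖x + y‖ + ‖x - y‖ :=
  calc 2 * ‖x‖ = ‖(2 : ℝ) • x‖ := by rw [norm_smul, Real.norm_two]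
    _ = ‖(x + y) + (x - y)‖ := by congr 1; module
    _ ≤ ‖x + y‖ + ‖x - y‖ := norm_add_le _ _

lemma averageGap_nonneg [NormedSpace ℝ Z] {x : Fin n → Z} (hn : 0 < n) (hx : ∀ i, ‖x i‖ = 1)
    (y : Z) : 0 ≤ averageGap x y := by
  have := averageGap_le_of_forall_le (x := x) (y := x) (a := 0) (b := y) (c := 0) hn fun i => by
    simpa [hx i, ← two_mul] using two_mul_norm_le_norm_add_add_norm_sub (x i) y
  rwa [averageGap_zero hn hx, add_zero] at this

end AverageGap

/-- The negation of `IsRough Z r` at the point `f`, below the scale `η₀`. -/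
def RoughAtMost {Z : Type*} [NormedAddCommGroup Z] (f : Z) (r η₀ : ℝ) : Prop :=
  ∀ g : Z, ‖g‖ < η₀ → ‖f + g‖ + ‖f - g‖ ≤ 2 + r * ‖g‖

lemma NonRough.exists_roughAtMost {Z : Type*} [NormedAddCommGroup Z] (h : NonRough Z) {r : ℝ}
    (hr : 0 < r) : ∃ f : Z, ‖f‖ = 1 ∧ ∃ η₀ > 0, RoughAtMost f r η₀ := by
  have hnot : ¬ IsRough Z r := fun hrough => h ⟨r, hr, hrough⟩
  simp only [IsRough, not_forall, not_exists, not_and, not_le] at hnot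
  obtain ⟨f, hf, ε, hε, η₀, hη₀, hflat⟩ := hnot
  refine ⟨f, hf, η₀, hη₀, fun g hg => ?_⟩
  rcases eq_or_ne g 0 with rfl | hg0
  · norm_num [hf]
  · have hgpos := norm_pos_iff.2 hg0
    nlinarith [hflat g hgpos hg]

section Operators

variable {X Y : Type*} [NormedAddCommGroup X] [NormedSpace ℝ X]
  [NormedAddCommGroup Y] [NormedSpace ℝ Y]

lemma StrongDual.apply_le_norm_of_norm_le_one (φ : StrongDual ℝ X) {x : X} (hx : ‖x‖ ≤ 1) :
    φ x ≤ ‖φ‖ :=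
  (Real.le_norm_self _).trans (φ.unit_le_opNorm x hx)

lemma exists_norm_le_one_nonneg_lt_norm_apply (A : X →L[ℝ] Y) (φ : StrongDual ℝ X) {c : ℝ}
    (hc : c < ‖A‖) : ∃ x : X, ‖x‖ ≤ 1 ∧ 0 ≤ φ x ∧ c < ‖A x‖ := by
  obtain ⟨x, hx, hcx⟩ := A.exists_lt_apply_of_lt_opNorm hc
  rcases le_total 0 (φ x) with hφx | hφx
  · exact ⟨x, hx.le, hφx, hcx⟩
  · exact ⟨-x, by simpa using hx.le, by simpa using hφx, by simpa using hcx⟩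

lemma RoughAtMost.norm_sub_le_of_le_apply {f : StrongDual ℝ X} {r η₀ β : ℝ}
    (hflat : RoughAtMost f r η₀) (hr : 0 ≤ r) (hη₀ : 0 < η₀) {u v : X} (hu : ‖u‖ ≤ 1) (hv : ‖v‖ ≤ 1)
    (hfu : 1 - β ≤ f u) (hfv : 1 - β ≤ f v) : ‖u - v‖ ≤ r + 4 * β / η₀ := by
  obtain ⟨g, hg, hguv⟩ := exists_dual_vector'' ℝ (u - v)
  set t := η₀ / 2 with ht
  have htg : ‖t • g‖ ≤ t := by
    rw [norm_smul, Real.norm_of_nonneg (by positivity)]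
    exact mul_le_of_le_one_right (by positivity) hg
  have hsum := hflat (t • g) (by linarith)
  have hplus := (f + t • g).apply_le_norm_of_norm_le_one hu
  have hminus := (f - t • g).apply_le_norm_of_norm_le_one hv
  simp only [add_apply, sub_apply, smul_apply, smul_eq_mul] at hplus hminus
  rw [map_sub, RCLike.ofReal_real_eq_id, id] at hguv
  have key : t * ‖u - v‖ ≤ t * (r + 4 * β / η₀) := by
    have e : t * (r + 4 * β / η₀) = r * t + 2 * β := by rw [ht]; field_simp; ring
    nlinarith [mul_le_mul_of_nonneg_left htg hr]
  exact le_of_mul_le_mul_left key (by positivity)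

lemma norm_smul_add_apply_le (S : X →L[ℝ] Y) (y : Y) {c : ℝ} (hc₀ : 0 ≤ c) (hc₁ : c ≤ 1)
    (x x₀ : X) : ‖c • y + S x‖ ≤ ‖y + S x₀‖ + ‖S‖ * ‖x - x₀‖ + (1 - c) * ‖S x₀‖ :=
  calc ‖c • y + S x‖ = ‖c • (y + S x₀) + S (x - x₀) + (1 - c) • S x₀‖ := by
        rw [map_sub]; congr 1; module
    _ ≤ ‖c • (y + S x₀)‖ + ‖S (x - x₀)‖ + ‖(1 - c) • S x₀‖ := norm_add₃_le
    _ ≤ ‖y + S x₀‖ + ‖S‖ * ‖x - x₀‖ + (1 - c) * ‖S x₀‖ := by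
        rw [norm_smul, norm_smul, Real.norm_of_nonneg hc₀, Real.norm_of_nonneg (by linarith)]
        gcongr
        · exact mul_le_of_le_one_left (norm_nonneg _) hc₁
        · exact S.le_opNorm _

lemma RoughAtMost.norm_smulRight_add_le {f : StrongDual ℝ X} {r η₀ α : ℝ}
    (hf : ‖f‖ = 1) (hflat : RoughAtMost f r η₀) (hr : 0 ≤ r) (hη₀ : 0 < η₀) {y : Y}
    (hy : ‖y‖ = 1) (S : X →L[ℝ] Y) (hα : 0 < α) {x₀ : X} (hx₀ : ‖x₀‖ ≤ 1)
    (hfx₀ : 1 - (2 * ‖S‖ + α) ≤ f x₀) :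
    ‖f.smulRight y + S‖ ≤
      ‖y + S x₀‖ + α + (2 * ‖S‖ + α) * ‖S‖ + ‖S‖ * (r + 4 * (2 * ‖S‖ + α) / η₀) := by
  set β := 2 * ‖S‖ + α
  obtain ⟨x, hx, hfx₀', hnorming⟩ :=
    exists_norm_le_one_nonneg_lt_norm_apply (f.smulRight y + S) f (sub_lt_self _ hα)
  have happly : (f.smulRight y + S) x = f x • y + S x := rfl
  rw [happly] at hnorming
  have hfx₁ : f x ≤ 1 := hf ▸ f.apply_le_norm_of_norm_le_one hx
  have hSx : ‖S x‖ ≤ ‖S‖ := S.unit_le_opNorm x hx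
  have hSx₀ : ‖S x₀‖ ≤ ‖S‖ := S.unit_le_opNorm x₀ hx₀
  -- `1 - ‖S‖ ≤ ‖f ⊗ y + S‖ < ‖f x • y + S x‖ + α ≤ f x + ‖S‖ + α`
  have hslice : 1 - β ≤ f x := by
    have hlow : 1 - ‖S‖ ≤ ‖f.smulRight y + S‖ := by
      simpa [norm_smulRight_apply, hf, hy] using norm_sub_le (f.smulRight y + S) S
    have hup : ‖f x • y + S x‖ ≤ f x + ‖S x‖ := by
      simpa [norm_smul, hy, abs_of_nonneg hfx₀'] using norm_add_le (f x • y) (S x)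
    linarith
  have hdist := hflat.norm_sub_le_of_le_apply hr hη₀ hx hx₀ hslice hfx₀
  have hdecomp := norm_smul_add_apply_le S y hfx₀' hfx₁ x x₀
  have h₁ : ‖S‖ * ‖x - x₀‖ ≤ ‖S‖ * (r + 4 * β / η₀) := by gcongr
  have h₂ : (1 - f x) * ‖S x₀‖ ≤ β * ‖S‖ := by
    gcongr
    linarith
  linarith

lemma RoughAtMost.exists_averageGap_smulRight_le {f : StrongDual ℝ X} {r η₀ : ℝ}
    (hf : ‖f‖ = 1) (hflat : RoughAtMost f r η₀) (hr : 0 < r) (hη₀ : 0 < η₀) {n : ℕ} (hn : 0 < n)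
    {y : Fin n → Y} (hy : ∀ i, ‖y i‖ = 1) (S : X →L[ℝ] Y) (hS : 0 < ‖S‖) :
    ∃ x₀ : X, ‖x₀‖ ≤ 1 ∧ averageGap (fun i => f.smulRight (y i)) S ≤
      averageGap y (S x₀) + 2 * ‖S‖ * (2 * r + (2 + r) * (4 / η₀ + 1) * ‖S‖) := by
  have hα : 0 < r * ‖S‖ := by positivity
  obtain ⟨x₀, hx₀, hfx₀, hslice⟩ := exists_norm_le_one_nonneg_lt_norm_apply f f
    (c := 1 - (2 * ‖S‖ + r * ‖S‖)) (by rw [hf]; linarith)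
  rw [Real.norm_of_nonneg hfx₀] at hslice
  refine ⟨x₀, hx₀, averageGap_le_of_forall_le hn fun i => ?_⟩
  have hplus := hflat.norm_smulRight_add_le hf hr.le hη₀ (hy i) S hα hx₀ hslice.le
  have hminus := hflat.norm_smulRight_add_le hf hr.le hη₀ (hy i) (-S) hα hx₀
    (by rw [norm_neg]; exact hslice.le)
  simp only [norm_neg, neg_apply, ← sub_eq_add_neg] at hminus
  have herror : r * ‖S‖ + (2 * ‖S‖ + r * ‖S‖) * ‖S‖ + ‖S‖ * (r + 4 * (2 * ‖S‖ + r * ‖S‖) / η₀) =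
      ‖S‖ * (2 * r + (2 + r) * (4 / η₀ + 1) * ‖S‖) := by
    field_simp
    ring
  linarith

end Operators

lemma exists_mul_norm_le_averageGap {Y : Type*} [NormedAddCommGroup Y] [NormedSpace ℝ Y]
    {n : ℕ} (hn : 0 < n) {y : Fin n → Y} (hy : ∀ i, ‖y i‖ = 1) {w : Y} {s η γ : ℝ} (hs : 0 < s)
    (hw : ‖w‖ ≤ s) (hsη : s < η) (hgap : γ * s ≤ averageGap y w) :
    ∃ z : Y, 0 < ‖z‖ ∧ ‖z‖ < η ∧ γ * ‖z‖ ≤ averageGap y z := by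
  rcases eq_or_ne w 0 with rfl | hw0
  · -- then `γ ≤ 0`, and any small nonzero vector will do
    rw [averageGap_zero hn hy] at hgap
    have hnorm : ‖(η / 2) • y ⟨0, hn⟩‖ = η / 2 := by
      rw [norm_smul, hy, mul_one, Real.norm_of_nonneg (by linarith)]
    refine ⟨(η / 2) • y ⟨0, hn⟩, by rw [hnorm]; linarith, by rw [hnorm]; linarith, ?_⟩
    have hγ : γ ≤ 0 := nonpos_of_mul_nonpos_left hgap hs
    exact (mul_nonpos_of_nonpos_of_nonneg hγ (norm_nonneg _)).trans (averageGap_nonneg hn hy _)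
  · refine ⟨w, norm_pos_iff.2 hw0, hw.trans_lt hsη, ?_⟩
    rcases le_total γ 0 with hγ | hγ
    · exact (mul_nonpos_of_nonpos_of_nonneg hγ (norm_nonneg w)).trans (averageGap_nonneg hn hy w)
    · exact (mul_le_mul_of_nonneg_left hw hγ).trans hgap

theorem stmt8
    (X Y : Type*) [NormedAddCommGroup X] [NormedSpace ℝ X]
    [NormedAddCommGroup Y] [NormedSpace ℝ Y]
    (H : Submodule ℝ (X →L[ℝ] Y))
    (hHfin : ∀ T : X →L[ℝ] Y, FiniteDimensional ℝ (LinearMap.range (T : X →ₗ[ℝ] Y)) → T ∈ H)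
    (δ : ℝ)
    (hH : IsAverageRough H δ) (hX : NonRough (StrongDual ℝ X)) :
    IsAverageRough Y δ := by
  intro n hn y hy ε hε η hη
  obtain ⟨f, hf, η₀, hη₀, hflat⟩ := hX.exists_roughAtMost (by positivity : 0 < ε / 16)
  have hf0 : f ≠ 0 := norm_ne_zero_iff.1 (by rw [hf]; exact one_ne_zero)
  set K := (2 + ε / 16) * (4 / η₀ + 1) with hK
  let T : Fin n → H := fun i => ⟨f.smulRight (y i), hHfin _ <| by
    rw [range_smulRight_apply hf0]; infer_instance⟩
  obtain ⟨⟨S, _⟩, hS0, hSη, hSgap⟩ := hH n hn T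
    (fun i => by simp [T, norm_smulRight_apply, hf, hy i])
    (ε / 2) (by positivity) (min η (ε / (8 * K))) (by positivity)
  change 0 < ‖S‖ at hS0
  change ‖S‖ < _ at hSη
  change (δ - ε / 2) * ‖S‖ ≤ averageGap (fun i => f.smulRight (y i)) S at hSgap
  obtain ⟨x₀, hx₀, hgap⟩ := hflat.exists_averageGap_smulRight_le hf (by positivity) hη₀ hn hy S hS0
  rw [← hK] at hgap
  have hSK : ‖S‖ * K ≤ ε / 8 := by
    have := (le_div_iff₀ (by positivity)).1 (hSη.le.trans (min_le_right _ _))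
    linarith
  refine exists_mul_norm_le_averageGap hn hy hS0 (S.unit_le_opNorm x₀ hx₀)
    (hSη.trans_le (min_le_left _ _)) ?_
  nlinarith [mul_le_mul_of_nonneg_left hSK hS0.le]
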